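/- arXiv:2406.01129 — 3 statements merged into one kernel-verified Lean document; each statement's English description precedes it below -/
import Mathlib

section
/- Let R be a commutative local ring, let I ⊆ J be ideals of R, let m ≥ 1 be a natural number, and let π : (R/I)^m → (R/J)^m be a surjective R-linear map. Then there exist an R-linear automorphism φ of (R/J)^m and an R-linear automorphism ψ of (R/I)^m such that φ ∘ π = can^{⊕m} and π ∘ ψ = can^{⊕m}, where can : R/I → R/J denotes the canonical quotient map (well defined since I ⊆ J) and can^{⊕m} applies can in each coordinate. -/
/-- Auxiliary: the `R`-linear map `x ↦ ∑ i, x i • v i` where `x i ∈ A`, `A` an `R`-algebra. -/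
def stmt0.lc {R A : Type*} [CommRing R] [CommRing A] [Algebra R A] {m : ℕ}
    (v : Fin m → (Fin m → A)) : (Fin m → A) →ₗ[R] (Fin m → A) where
  toFun x := ∑ i, x i • v i
  map_add' x y := by simp [add_smul, Finset.sum_add_distrib]
  map_smul' r x := by simp [Finset.smul_sum, smul_assoc]


/-- Let `R` be a commutative local ring, `I ⊆ J` ideals of `R`, `m ≥ 1`,
and `π : (R/I)^m → (R/J)^m` a surjective `R`-linear map.  Then there are `R`-linear
automorphisms `φ` of `(R/J)^m` and `ψ` of `(R/I)^m` such that
`φ ∘ π = can^{⊕m}` and `π ∘ ψ = can^{⊕m}`, where `can : R/I → R/J` is the canonical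
quotient map. -/
theorem stmt0 {R : Type*} [CommRing R] [IsLocalRing R] (I J : Ideal R) (hIJ : I ≤ J)
    (m : ℕ) (hm : 1 ≤ m)
    (π : (Fin m → R ⧸ I) →ₗ[R] (Fin m → R ⧸ J)) (hπ : Function.Surjective π) :
    ∃ (φ : (Fin m → R ⧸ J) ≃ₗ[R] (Fin m → R ⧸ J))
      (ψ : (Fin m → R ⧸ I) ≃ₗ[R] (Fin m → R ⧸ I)),
      (φ.toLinearMap ∘ₗ π =
        LinearMap.compLeft (Submodule.mapQ I J LinearMap.id (fun _ hx => hIJ hx)) (Fin m)) ∧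
      (π ∘ₗ ψ.toLinearMap =
        LinearMap.compLeft (Submodule.mapQ I J LinearMap.id (fun _ hx => hIJ hx)) (Fin m)) := by
  classical
  set c : (R ⧸ I) →ₗ[R] (R ⧸ J) := Submodule.mapQ I J LinearMap.id (fun _ hx => hIJ hx) with hc
  set q : (Fin m → R ⧸ I) →ₗ[R] (Fin m → R ⧸ J) := LinearMap.compLeft c (Fin m) with hq
  -- the `J = ⊤` degenerate case
  by_cases hJtop : J = ⊤
  · subst hJtop
    have : Subsingleton (R ⧸ (⊤ : Ideal R)) := Submodule.Quotient.subsingleton_iff.mpr rfl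
    refine ⟨LinearEquiv.refl _ _, LinearEquiv.refl _ _, ?_, ?_⟩ <;>
      · ext x i
        exact Subsingleton.elim _ _
  -- main case
  have hJm : J ≤ IsLocalRing.maximalIdeal R := IsLocalRing.le_maximalIdeal hJtop
  -- basic facts about q
  have hq_mk : ∀ (r : Fin m → R),
      q (fun i => Ideal.Quotient.mk I (r i)) = fun i => Ideal.Quotient.mk J (r i) := by
    intro r
    funext i
    simp [hq, LinearMap.compLeft_apply, hc]
  have hq_surj : Function.Surjective q := by
    intro y
    choose r hr using fun i => Ideal.Quotient.mk_surjective (I := J) (y i)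
    exact ⟨fun i => Ideal.Quotient.mk I (r i), by rw [hq_mk]; funext i; exact hr i⟩
  -- coordinate decomposition of mk-tuples
  have hdecompI : ∀ (r : Fin m → R),
      (fun i => Ideal.Quotient.mk I (r i)) = ∑ i, r i • (Pi.single i (1 : R ⧸ I) : Fin m → R ⧸ I) := by
    intro r
    funext j
    rw [Finset.sum_apply]
    simp [Pi.single_apply, Algebra.smul_def, eq_comm]
  -- applying `lc` to a mk-tuple
  have hlcI : ∀ (v : Fin m → (Fin m → R ⧸ I)) (r : Fin m → R),
      stmt0.lc (R := R) v (fun i => Ideal.Quotient.mk I (r i)) = ∑ i, r i • v i := by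
    intro v r
    show (∑ i, (Ideal.Quotient.mk I (r i)) • v i) = _
    refine Finset.sum_congr rfl fun i _ => ?_
    rw [← Ideal.Quotient.algebraMap_eq, algebraMap_smul]
  have hlcJ : ∀ (v : Fin m → (Fin m → R ⧸ J)) (r : Fin m → R),
      stmt0.lc (R := R) v (fun i => Ideal.Quotient.mk J (r i)) = ∑ i, r i • v i := by
    intro v r
    show (∑ i, (Ideal.Quotient.mk J (r i)) • v i) = _
    refine Finset.sum_congr rfl fun i _ => ?_
    rw [← Ideal.Quotient.algebraMap_eq, algebraMap_smul]
  -- choose a lift of π through q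
  choose v hv using fun i => hq_surj (π (Pi.single i (1 : R ⧸ I)))
  set π' : (Fin m → R ⧸ I) →ₗ[R] (Fin m → R ⧸ I) := stmt0.lc v with hπ'
  -- q ∘ π' = π
  have hqπ' : ∀ x, q (π' x) = π x := by
    intro x
    choose r hr using fun i => Ideal.Quotient.mk_surjective (I := I) (x i)
    have hx : x = fun i => Ideal.Quotient.mk I (r i) := by funext i; rw [hr]
    rw [hx, hπ', hlcI, map_sum, hdecompI r, map_sum]
    refine Finset.sum_congr rfl fun i _ => ?_
    rw [map_smul, map_smul, hv]
  -- kernel of q is contained in m • ⊤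
  have hker : ∀ z, q z = 0 →
      z ∈ (IsLocalRing.maximalIdeal R) • (⊤ : Submodule R (Fin m → R ⧸ I)) := by
    intro z hz
    choose r hr using fun i => Ideal.Quotient.mk_surjective (I := I) (z i)
    have hz' : z = fun i => Ideal.Quotient.mk I (r i) := by funext i; rw [hr]
    have hrJ : ∀ i, r i ∈ J := by
      intro i
      have h0 : Ideal.Quotient.mk J (r i) = 0 := by
        have := congrFun (hz' ▸ hz : q (fun i => Ideal.Quotient.mk I (r i)) = 0) i
        rwa [hq_mk r] at this
      exact Ideal.Quotient.eq_zero_iff_mem.mp h0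
    rw [hz', hdecompI r]
    exact Submodule.sum_mem _ fun i _ =>
      Submodule.smul_mem_smul (hJm (hrJ i)) Submodule.mem_top
  -- π' is surjective by Nakayama
  have hπ'surj : Function.Surjective π' := by
    rw [← LinearMap.range_eq_top]
    have key : (⊤ : Submodule R (Fin m → R ⧸ I)) ≤
        LinearMap.range π' ⊔ (IsLocalRing.maximalIdeal R) • ⊤ := by
      intro y _
      obtain ⟨x, hx⟩ := hπ (q y)
      have h0 : q (y - π' x) = 0 := by rw [map_sub, hqπ' x, hx, sub_self]
      have hy : y = π' x + (y - π' x) := by ring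
      rw [hy]
      exact Submodule.add_mem_sup (LinearMap.mem_range_self π' x) (hker _ h0)
    have := Submodule.le_of_le_smul_of_le_jacobson_bot Module.Finite.fg_top
      (IsLocalRing.maximalIdeal_le_jacobson ⊥) key
    exact top_le_iff.mp this
  have hπ'bij : Function.Bijective π' :=
    OrzechProperty.bijective_of_surjective_endomorphism π' hπ'surj
  set ψe : (Fin m → R ⧸ I) ≃ₗ[R] (Fin m → R ⧸ I) := LinearEquiv.ofBijective π' hπ'bij
  -- the descended endomorphism on (R/J)^m
  set w : Fin m → (Fin m → R ⧸ J) := fun i => π (Pi.single i 1) with hw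
  set φ₀ : (Fin m → R ⧸ J) →ₗ[R] (Fin m → R ⧸ J) := stmt0.lc w with hφ₀
  have hφ₀q : ∀ x, φ₀ (q x) = π x := by
    intro x
    choose r hr using fun i => Ideal.Quotient.mk_surjective (I := I) (x i)
    have hx : x = fun i => Ideal.Quotient.mk I (r i) := by funext i; rw [hr]
    rw [hx, hq_mk, hφ₀, hlcJ, hdecompI r, map_sum]
    exact Finset.sum_congr rfl fun i _ => by rw [map_smul, hw]
  have hφ₀surj : Function.Surjective φ₀ := by
    intro y
    obtain ⟨x, hx⟩ := hπ y
    exact ⟨q x, by rw [hφ₀q x, hx]⟩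
  have hφ₀bij : Function.Bijective φ₀ :=
    OrzechProperty.bijective_of_surjective_endomorphism φ₀ hφ₀surj
  set φe : (Fin m → R ⧸ J) ≃ₗ[R] (Fin m → R ⧸ J) := LinearEquiv.ofBijective φ₀ hφ₀bij
  refine ⟨φe.symm, ψe.symm, ?_, ?_⟩
  · refine LinearMap.ext fun x => ?_
    show φe.symm (π x) = q x
    apply φe.injective
    rw [LinearEquiv.apply_symm_apply]
    show π x = φ₀ (q x)
    rw [hφ₀q x]
  · refine LinearMap.ext fun x => ?_
    show π (ψe.symm x) = q x
    rw [← hqπ' (ψe.symm x)]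
    congr 1
    show ψe (ψe.symm x) = x
    exact ψe.apply_symm_apply x
end

section
/- Let K be a field, L a Lie algebra over K, and H a nilpotent abelian Lie subalgebra of L. Let M be a Lie module over L. Assume: (i) M is the sum of its generalized weight spaces for H, i.e. the subspaces M^χ = {v ∈ M : for every h ∈ H there is n ≥ 1 with (h·(−) − χ(h))^n v = 0}, over all functions χ : H → K, together span M; (ii) L is spanned as a K-vector space by elements x for which there exists a function α : H → K with ⁅h, x⁆ = α(h)·x for all h ∈ H. Then for every h ∈ H there exists a K-linear endomorphism N_h of M such that N_h(v) = h·v − χ(h)·v for every χ and every v ∈ M^χ, and N_h is L-equivariant: N_h(x·v) = x·N_h(v) for all x ∈ L and v ∈ M (here x·v denotes the Lie module action ⁅x, v⁆). -/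
/-- The generalized weight space of a Lie module `M` for a Lie subalgebra `H` of `L`
and a function `χ : H → K`: the set of `v ∈ M` such that for every `h ∈ H` some power
of the operator `(h • ·) - χ h` annihilates `v`. -/
def genWeightVectors (K : Type*) {L : Type*} (M : Type*) [Field K] [LieRing L]
    [LieAlgebra K L] [AddCommGroup M] [Module K M] [LieRingModule L M] [LieModule K L M]
    (H : LieSubalgebra K L) (χ : H → K) : Set M :=
  {v : M | ∀ h : H, ∃ n : ℕ, 1 ≤ n ∧
    ((LieModule.toEnd K L M (h : L) - χ h • (1 : Module.End K M)) ^ n) v = 0}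

/-!
Since `M` is the direct sum of the generalized weight spaces `M^χ`, `N_h` can be defined
summand by summand as `h - χ h`. A vector `x` on which `H` acts by a weight `α` maps `M^χ`
into `M^(α + χ)`, where the Leibniz rule shows that `N_h` commutes with `x`; such vectors
span `L`, and the set of `x` whose action commutes with `N_h` is a subspace.
-/

theorem DirectSum.IsInternal.exists_linearMap_eq {R ι M N : Type*} [DecidableEq ι] [Semiring R]
    [AddCommMonoid M] [Module R M] [AddCommMonoid N] [Module R N] {A : ι → Submodule R M}
    (hA : DirectSum.IsInternal A) (f : ∀ i, A i →ₗ[R] N) :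
    ∃ g : M →ₗ[R] N, ∀ i (v : A i), g v = f i v := by
  let e := LinearEquiv.ofBijective (DirectSum.coeLinearMap A) hA
  refine ⟨DirectSum.toModule R ι N f ∘ₗ e.symm.toLinearMap, fun i v => ?_⟩
  have he : e.symm v = DirectSum.lof R ι (fun i => A i) i v :=
    e.symm_apply_eq.mpr <| by
      rw [DirectSum.lof_eq_of]; exact (DirectSum.coeLinearMap_of A i v).symm
  rw [LinearMap.comp_apply, LinearEquiv.coe_coe, he, DirectSum.toModule_lof]

theorem LieModule.commute_toEnd_of_span_eq_top {K L M : Type*} [CommRing K] [LieRing L]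
    [LieAlgebra K L] [AddCommGroup M] [Module K M] [LieRingModule L M] [LieModule K L M]
    {s : Set L} (hs : Submodule.span K s = ⊤) {N : Module.End K M}
    (hN : ∀ x ∈ s, Commute N (LieModule.toEnd K L M x)) (x : L) :
    Commute N (LieModule.toEnd K L M x) := by
  have hx : x ∈ Submodule.span K s := hs ▸ Submodule.mem_top
  induction hx using Submodule.span_induction with
  | mem y hy => exact hN y hy
  | zero => simp
  | add y z _ _ hy hz => simpa using hy.add_right hz
  | smul c y _ hy => simpa using hy.smul_right c

section GenWeightSpace

open LieModule

variable {K L M : Type*} [Field K] [LieRing L] [LieAlgebra K L]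
  [AddCommGroup M] [Module K M] [LieRingModule L M] [LieModule K L M]
  {H : LieSubalgebra K L} [LieRing.IsNilpotent H]

theorem genWeightVectors_eq_genWeightSpace (χ : H → K) :
    genWeightVectors K M H χ = ((genWeightSpace M χ : LieSubmodule K H M) : Submodule K M) := by
  ext v
  rw [SetLike.mem_coe, LieSubmodule.mem_toSubmodule, mem_genWeightSpace]
  refine forall_congr' fun h => ⟨fun ⟨n, _, hn⟩ => ⟨n, hn⟩, fun ⟨n, hn⟩ => ⟨n + 1, by omega, ?_⟩⟩
  rw [pow_succ', Module.End.mul_apply]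
  exact (congrArg _ hn).trans (map_zero _)

open scoped Classical in
theorem isInternal_genWeightSpace_of_span_genWeightVectors
    (hweight : Submodule.span K (⋃ χ : H → K, genWeightVectors K M H χ) = ⊤) :
    DirectSum.IsInternal fun χ : H → K ↦ (genWeightSpace M χ : Submodule K M) := by
  refine DirectSum.isInternal_submodule_of_iSupIndep_of_iSup_eq_top ?_ ?_
  · exact LieSubmodule.iSupIndep_toSubmodule.mpr (iSupIndep_genWeightSpace K H M)
  · simpa only [genWeightVectors_eq_genWeightSpace, Submodule.span_iUnion,
      Submodule.span_eq] using hweight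

theorem mem_rootSpace_of_forall_lie_eq_smul {α : H → K} {x : L}
    (hx : ∀ h : H, ⁅(h : L), x⁆ = α h • x) : x ∈ LieAlgebra.rootSpace H α := by
  rw [mem_genWeightSpace]
  refine fun h => ⟨1, ?_⟩
  simp [LieSubalgebra.coe_bracket_of_module, hx h]

/-- `x` maps `M^χ` to `M^(α + χ)`, and the weights cancel in
`⁅h, ⁅x, v⁆⁆ = α h • ⁅x, v⁆ + ⁅x, ⁅h, v⁆⁆`. -/
theorem map_lie_eq_lie_map_of_forall_lie_eq_smul {h : H} {N : Module.End K M}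
    (hN : ∀ χ : H → K, ∀ v ∈ genWeightSpace M χ, N v = ⁅(h : L), v⁆ - χ h • v)
    {α : H → K} {x : L} (hx : ∀ h : H, ⁅(h : L), x⁆ = α h • x)
    {χ : H → K} {v : M} (hv : v ∈ genWeightSpace M χ) : N ⁅x, v⁆ = ⁅x, N v⁆ := by
  have hxv : ⁅x, v⁆ ∈ genWeightSpace M (α + χ) :=
    LieAlgebra.mapsTo_toEnd_genWeightSpace_add_of_mem_rootSpace K L H M α χ
      (mem_rootSpace_of_forall_lie_eq_smul hx) hv
  rw [hN _ _ hxv, hN _ _ hv, leibniz_lie, hx h]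
  simp only [Pi.add_apply, lie_sub, lie_smul, smul_lie]
  module

end GenWeightSpace

theorem stmt3_general {K L M : Type*} [Field K] [LieRing L] [LieAlgebra K L]
    [AddCommGroup M] [Module K M] [LieRingModule L M] [LieModule K L M]
    (H : LieSubalgebra K L) (hnilp : LieRing.IsNilpotent H)
    (hweight : Submodule.span K (⋃ χ : H → K, genWeightVectors K M H χ) = ⊤)
    (hroot : Submodule.span K
      {x : L | ∃ α : H → K, ∀ h : H, ⁅(h : L), x⁆ = α h • x} = ⊤) :
    ∀ h : H, ∃ N : M →ₗ[K] M,
      (∀ (χ : H → K), ∀ v ∈ genWeightVectors K M H χ, N v = ⁅(h : L), v⁆ - χ h • v) ∧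
      (∀ (x : L) (v : M), N ⁅x, v⁆ = ⁅x, N v⁆) := by
  classical
  intro h
  obtain ⟨N, hN⟩ := (isInternal_genWeightSpace_of_span_genWeightVectors hweight).exists_linearMap_eq
    fun χ ↦ (LieModule.toEnd K L M h - χ h • 1).domRestrict _
  have hN' : ∀ χ : H → K, ∀ v ∈ LieModule.genWeightSpace M χ, N v = ⁅(h : L), v⁆ - χ h • v :=
    fun χ v hv ↦ hN χ ⟨v, hv⟩
  have hcomm : ∀ x ∈ {x : L | ∃ α : H → K, ∀ h : H, ⁅(h : L), x⁆ = α h • x},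
      Commute N (LieModule.toEnd K L M x) := by
    intro x ⟨α, hx⟩
    refine LinearMap.ext_on hweight fun v hv ↦ ?_
    obtain ⟨χ, hv⟩ := Set.mem_iUnion.mp hv
    rw [genWeightVectors_eq_genWeightSpace] at hv
    exact map_lie_eq_lie_map_of_forall_lie_eq_smul hN' hx hv
  refine ⟨N, fun χ v hv ↦ hN' χ v ?_, fun x v ↦ ?_⟩
  · rwa [genWeightVectors_eq_genWeightSpace] at hv
  · exact LinearMap.congr_fun (LieModule.commute_toEnd_of_span_eq_top hroot hcomm x) v

/-- Let `K` be a field, `L` a Lie algebra over `K`, `H` a nilpotent abelian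
Lie subalgebra of `L`, and `M` a Lie module over `L`.  Assume (i) `M` is spanned by its
generalized weight spaces for `H`, and (ii) `L` is spanned by elements `x` admitting a
function `α : H → K` with `⁅h, x⁆ = α h • x` for all `h ∈ H`.  Then for every `h ∈ H`
there is a `K`-linear endomorphism `N` of `M` with `N v = h • v - χ h • v` for every `χ`
and every `v` in the generalized weight space `M^χ`, and `N` is `L`-equivariant. -/
theorem stmt3 {K L M : Type*} [Field K] [LieRing L] [LieAlgebra K L]
    [AddCommGroup M] [Module K M] [LieRingModule L M] [LieModule K L M]
    (H : LieSubalgebra K L) (habelian : IsLieAbelian H) (hnilp : LieRing.IsNilpotent H)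
    (hweight : Submodule.span K (⋃ χ : H → K, genWeightVectors K M H χ) = ⊤)
    (hroot : Submodule.span K
      {x : L | ∃ α : H → K, ∀ h : H, ⁅(h : L), x⁆ = α h • x} = ⊤) :
    ∀ h : H, ∃ N : M →ₗ[K] M,
      (∀ (χ : H → K), ∀ v ∈ genWeightVectors K M H χ, N v = ⁅(h : L), v⁆ - χ h • v) ∧
      (∀ (x : L) (v : M), N ⁅x, v⁆ = ⁅x, N v⁆) :=
  stmt3_general H hnilp hweight hroot
end

section
/- Let K be a field, V a K-vector space and f a K-linear endomorphism of V. Assume: (i) every v ∈ V lies in some finite-dimensional f-invariant subspace of V; (ii) for every finite-dimensional f-invariant subspace W of V, the characteristic polynomial of the restriction f|_W splits into linear factors over K. Then there exists a unique pair (D, N) of K-linear endomorphisms of V with f = D + N such that every finite-dimensional f-invariant subspace W of V is stable under both D and N, the restriction D|_W is diagonalizable, and the restriction N|_W is nilpotent. Moreover D and N commute with each other. -/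
/-!
The hypotheses make `V` the direct sum of the generalized eigenspaces `V_μ` of `f`: every vector
lies in a finite-dimensional invariant subspace `W`, and `W = ⨁ μ, W ⊓ V_μ` because the
characteristic polynomial of `f|_W` splits. Take `D = μ` on `V_μ` and `N = f - D`; both preserve
every such `W`, where `D` is diagonal and `N` is locally nilpotent.

For uniqueness, let `(D', N')` be another such pair and `Z ⊆ V_μ` finite-dimensional and
`f`-invariant. Every `(f - μ)`-stable subspace of `Z` is `f`-invariant, hence `N'`-stable; in
particular `N'` stabilises the flag of ranges of `(f - μ) ^ k`, which `f - μ` moves one step down.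
Since `N'` is nilpotent, `D' - μ = (f - μ) - N'` is therefore nilpotent on `Z`; being diagonalizable
there, it vanishes, so `D' = D` on each `V_μ`.
-/

/-- The pair `(D, N)` is a locally finite Jordan–Chevalley decomposition of `f`:
`f = D + N`, and every finite-dimensional `f`-invariant subspace `W` is stable under
`D` and `N`, with `D|_W` diagonalizable (its eigenspaces span `W`) and `N|_W`
nilpotent. -/
def IsLocallyFiniteJordanDecomposition {K V : Type*} [Field K] [AddCommGroup V]
    [Module K V] (f D N : V →ₗ[K] V) : Prop :=
  f = D + N ∧
    ∀ W : Submodule K V, (∀ x ∈ W, f x ∈ W) → FiniteDimensional K W →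
      ∃ (hD : ∀ x ∈ W, D x ∈ W) (hN : ∀ x ∈ W, N x ∈ W),
        (⨆ μ : K, Module.End.eigenspace (D.restrict hD) μ) = ⊤ ∧
        IsNilpotent (N.restrict hN)

open Polynomial

namespace Module.End

section Field

variable {K V : Type*} [Field K] [AddCommGroup V] [Module K V]

theorem ker_aeval_prod_X_sub_C_pow_le_iSup_maxGenEigenspace (g : End K V) (s : Finset K)
    (m : K → ℕ) :
    LinearMap.ker (aeval g (∏ a ∈ s, (X - C a) ^ m a)) ≤ ⨆ μ, g.maxGenEigenspace μ := by
  classical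
  induction s using Finset.induction_on with
  | empty => simp [one_eq_id]
  | insert a s has ih =>
    have hcop : IsCoprime ((X - C a) ^ m a) (∏ b ∈ s, (X - C b) ^ m b) :=
      IsCoprime.prod_right fun b hb => IsCoprime.pow <|
        pairwise_coprime_X_sub_C (s := id) Function.injective_id (ne_of_mem_of_not_mem hb has).symm
    rw [Finset.prod_insert has, ← sup_ker_aeval_eq_ker_aeval_mul_of_coprime g hcop]
    refine sup_le ?_ ih
    have hker : LinearMap.ker (aeval g ((X - C a) ^ m a)) = g.genEigenspace a (m a) := by
      rw [genEigenspace_nat, map_pow, map_sub, aeval_X, aeval_C, algebraMap_end_eq_smul_id]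
      rfl
    exact hker ▸ (g.genEigenspace_le_maximal a (m a)).trans (le_iSup _ a)

theorem iSup_maxGenEigenspace_eq_top_of_splits [FiniteDimensional K V] (g : End K V)
    (h : g.charpoly.Splits) : ⨆ μ, g.maxGenEigenspace μ = ⊤ := by
  classical
  have hprod := h.eq_prod_roots_of_monic g.charpoly_monic
  rw [Finset.prod_multiset_map_count] at hprod
  refine top_unique ?_
  calc ⊤ = LinearMap.ker (aeval g g.charpoly) := by rw [g.aeval_self_charpoly, LinearMap.ker_zero]
    _ ≤ _ := hprod ▸ ker_aeval_prod_X_sub_C_pow_le_iSup_maxGenEigenspace g _ _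

theorem iSup_inf_maxGenEigenspace_eq_of_splits {f : End K V} {W : Submodule K V}
    (hW : ∀ x ∈ W, f x ∈ W) [FiniteDimensional K W] (h : (f.restrict hW).charpoly.Splits) :
    ⨆ μ, W ⊓ f.maxGenEigenspace μ = W := by
  calc ⨆ μ, W ⊓ f.maxGenEigenspace μ
      = (⨆ μ, maxGenEigenspace (f.restrict hW) μ).map W.subtype := by
        simp only [Submodule.map_iSup, Submodule.inf_genEigenspace f W hW]
    _ = W := by rw [iSup_maxGenEigenspace_eq_top_of_splits _ h, Submodule.map_subtype_top]

theorem isNilpotent_restrict_sub_smul_of_le_maxGenEigenspace {g : End K V} {p : Submodule K V}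
    [FiniteDimensional K p] (hp : ∀ x ∈ p, g x ∈ p) {μ : K} (hle : p ≤ g.maxGenEigenspace μ) :
    IsNilpotent (g.restrict hp - μ • 1) := by
  have htop : maxGenEigenspace (g.restrict hp) μ = ⊤ := by
    rw [maxGenEigenspace, genEigenspace_restrict]
    exact Submodule.comap_subtype_eq_top.mpr hle
  refine ((LinearMap.charpoly_nilpotent_tfae _).out 0 2).mpr fun y => ?_
  exact (mem_maxGenEigenspace _ _ _).mp (htop ▸ Submodule.mem_top)

theorem eq_smul_one_of_iSup_eigenspace_eq_top_of_isNilpotent {T : End K V} {μ : K}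
    (hT : ⨆ ν, T.eigenspace ν = ⊤) (hnil : IsNilpotent (T - μ • 1)) : T = μ • 1 := by
  refine LinearMap.eqLocus_eq_top.mp (top_unique (hT ▸ iSup_le fun ν v hv => ?_))
  obtain ⟨n, hn⟩ := hnil
  have hTv : T v = ν • v := mem_eigenspace_iff.mp hv
  have hsub : (T - μ • 1) v = (ν - μ) • v := by simp [hTv, sub_smul]
  have hpow (k : ℕ) : ((T - μ • 1) ^ k) v = (ν - μ) ^ k • v := by
    induction k with
    | zero => simp
    | succ k ih => rw [pow_succ, mul_apply, hsub, map_smul, ih, smul_smul, ← pow_succ']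
  rcases smul_eq_zero.mp ((hpow n).symm.trans (by simp [hn])) with h | rfl
  · simp [hTv, sub_eq_zero.mp (pow_eq_zero_iff'.mp h).1]
  · exact zero_mem _

end Field

section Ring

variable {R M : Type*} [Ring R] [AddCommGroup M] [Module R M]

theorem pow_apply_eq_pow_apply_of_eqOn {g h : End R M} {p : Submodule R M}
    (hp : ∀ x ∈ p, h x ∈ p) (hgh : ∀ x ∈ p, g x = h x) (k : ℕ) {x : M} (hx : x ∈ p) :
    (g ^ k) x = (h ^ k) x := by
  induction k generalizing x with
  | zero => rfl
  | succ k ih => rw [pow_succ, pow_succ, mul_apply, mul_apply, hgh x hx, ih (hp x hx)]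

theorem isNilpotent_add_of_forall_mapsTo {a b : End R M} (ha : IsNilpotent a)
    (hb : IsNilpotent b) (hab : ∀ p : Submodule R M, (∀ x ∈ p, a x ∈ p) → ∀ x ∈ p, b x ∈ p) :
    IsNilpotent (a + b) := by
  obtain ⟨n, hn⟩ := ha
  obtain ⟨m, hm⟩ := hb
  have ha_range (k : ℕ) : ∀ x ∈ LinearMap.range (a ^ k), a x ∈ LinearMap.range (a ^ (k + 1)) := by
    rintro _ ⟨y, rfl⟩
    exact ⟨y, by rw [pow_succ', mul_apply]⟩
  have ha_inv (k : ℕ) : ∀ x ∈ LinearMap.range (a ^ k), a x ∈ LinearMap.range (a ^ k) := by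
    rintro _ ⟨y, rfl⟩
    exact ⟨a y, by rw [← mul_apply, ← pow_succ, pow_succ', mul_apply]⟩
  have hb_inv (k : ℕ) := hab _ (ha_inv k)
  -- on `range (a ^ k)`, the maps `(a + b) ^ j` and `b ^ j` agree modulo `range (a ^ (k + 1))`
  have hmod (k j : ℕ) : ∀ x ∈ LinearMap.range (a ^ k),
      ((a + b) ^ j) x - (b ^ j) x ∈ LinearMap.range (a ^ (k + 1)) := by
    induction j with
    | zero => simp
    | succ j ih =>
      intro x hx
      have hbx : (b ^ j) x ∈ LinearMap.range (a ^ k) := by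
        rw [coe_pow]; exact Set.MapsTo.iterate (fun y hy => hb_inv k y hy) j hx
      have hsplit : ((a + b) ^ (j + 1)) x - (b ^ (j + 1)) x =
          (a + b) (((a + b) ^ j) x - (b ^ j) x) + a ((b ^ j) x) := by
        simp only [pow_succ', mul_apply, map_sub, LinearMap.add_apply]
        abel
      rw [hsplit]
      refine add_mem ?_ (ha_range k _ hbx)
      exact add_mem (ha_inv _ _ (ih x hx)) (hb_inv _ _ (ih x hx))
  have hflag (k : ℕ) : ∀ x, ((a + b) ^ (m * k)) x ∈ LinearMap.range (a ^ k) := by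
    induction k with
    | zero => simp
    | succ k ih =>
      intro x
      rw [show m * (k + 1) = m + m * k by ring, pow_add (a + b), mul_apply]
      simpa [hm] using hmod k m _ (ih x)
  refine ⟨m * n, LinearMap.ext fun x => ?_⟩
  simpa [hn] using hflag n x

end Ring

end Module.End

theorem Submodule.iSup_comap_subtype_eq_top {R M ι : Type*} [Semiring R] [AddCommMonoid M]
    [Module R M] {W : Submodule R M} {E : ι → Submodule R M} (h : W ≤ ⨆ i, W ⊓ E i) :
    ⨆ i, (E i).comap W.subtype = ⊤ := by
  apply Submodule.map_injective_of_injective W.injective_subtype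
  simp only [Submodule.map_iSup, Submodule.map_subtype_top, Submodule.map_comap_subtype]
  exact le_antisymm (iSup_le fun _ => inf_le_left) h

theorem LinearMap.ext_of_iSup_eq_top {R M N ι : Type*} [Semiring R] [AddCommMonoid M]
    [AddCommMonoid N] [Module R M] [Module R N] {A : ι → Submodule R M} (hA : ⨆ i, A i = ⊤)
    {g h : M →ₗ[R] N} (hgh : ∀ i, ∀ x ∈ A i, g x = h x) : g = h :=
  LinearMap.eqLocus_eq_top.mp (top_unique (hA ▸ iSup_le hgh))

namespace DirectSum.IsInternal

variable {R M ι : Type*} [CommRing R] [AddCommGroup M] [Module R M] [DecidableEq ι]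
  {A : ι → Submodule R M}

noncomputable def scalarEnd (hA : IsInternal A) (c : ι → R) : Module.End R M :=
  toModule R ι M (fun i => c i • (A i).subtype) ∘ₗ
    (LinearEquiv.ofBijective (coeLinearMap A) hA).symm.toLinearMap

theorem scalarEnd_apply_of_mem (hA : IsInternal A) (c : ι → R) {i : ι} {x : M} (hx : x ∈ A i) :
    hA.scalarEnd c x = c i • x := by
  have hsymm : (LinearEquiv.ofBijective (coeLinearMap A) hA).symm x = lof R ι _ i ⟨x, hx⟩ :=
    (LinearEquiv.symm_apply_eq _).mpr (coeLinearMap_of A i ⟨x, hx⟩).symm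
  simp [scalarEnd, hsymm, toModule_lof]

end DirectSum.IsInternal

section LocallyFinite

open Module Module.End

variable {K V : Type*} [Field K] [AddCommGroup V] [Module K V] {f : End K V}

theorem iSup_maxGenEigenspace_eq_top_of_locallyFinite
    (hloc : ∀ v : V, ∃ W : Submodule K V, FiniteDimensional K W ∧ (∀ x ∈ W, f x ∈ W) ∧ v ∈ W)
    (hsplit : ∀ (W : Submodule K V) (hW : ∀ x ∈ W, f x ∈ W) [FiniteDimensional K W],
      (f.restrict hW).charpoly.Splits) :
    ⨆ μ, f.maxGenEigenspace μ = ⊤ := by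
  refine eq_top_iff.mpr fun v _ => ?_
  obtain ⟨W, hWfin, hW, hv⟩ := hloc v
  have hWG : W ≤ ⨆ μ, f.maxGenEigenspace μ :=
    (iSup_inf_maxGenEigenspace_eq_of_splits hW (hsplit W hW)).ge.trans
      (iSup_mono fun μ => inf_le_right)
  exact hWG hv

theorem commute_scalarEnd_maxGenEigenspace [DecidableEq K]
    (hG : DirectSum.IsInternal f.maxGenEigenspace) : Commute (hG.scalarEnd id) f := by
  refine LinearMap.ext_of_iSup_eq_top hG.submodule_iSup_eq_top fun μ x hx => ?_
  have hfx : f x ∈ f.maxGenEigenspace μ := f.mapsTo_maxGenEigenspace_of_comm rfl μ hx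
  simp [hG.scalarEnd_apply_of_mem id hx, hG.scalarEnd_apply_of_mem id hfx]

theorem isLocallyFiniteJordanDecomposition_scalarEnd [DecidableEq K]
    (hG : DirectSum.IsInternal f.maxGenEigenspace)
    (hsplit : ∀ (W : Submodule K V) (hW : ∀ x ∈ W, f x ∈ W) [FiniteDimensional K W],
      (f.restrict hW).charpoly.Splits) :
    IsLocallyFiniteJordanDecomposition f (hG.scalarEnd id) (f - hG.scalarEnd id) := by
  set D := hG.scalarEnd id
  have hDG (μ : K) (x : V) (hx : x ∈ f.maxGenEigenspace μ) : D x = μ • x :=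
    hG.scalarEnd_apply_of_mem id hx
  have hN : maxGenEigenspace (f - D) 0 = ⊤ := by
    refine top_unique (hG.submodule_iSup_eq_top ▸ iSup_le fun μ x hx => ?_)
    obtain ⟨k, hk⟩ := (mem_maxGenEigenspace _ _ _).mp hx
    refine (mem_maxGenEigenspace _ _ _).mpr ⟨k, ?_⟩
    have hfμ : ∀ y ∈ f.maxGenEigenspace μ, (f - μ • 1) y ∈ f.maxGenEigenspace μ :=
      fun y hy => f.mapsTo_maxGenEigenspace_of_comm (Algebra.mul_sub_algebraMap_commutes f μ) μ hy
    rw [zero_smul, sub_zero, pow_apply_eq_pow_apply_of_eqOn hfμ (fun y hy => ?_) k hx, hk]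
    simp [hDG μ y hy]
  refine ⟨(add_sub_cancel D f).symm, fun W hW _ => ?_⟩
  have hWG := iSup_inf_maxGenEigenspace_eq_of_splits hW (hsplit W hW)
  have hDW : W ≤ W.comap D := hWG.ge.trans <| iSup_le fun μ y hy => by
    simpa [hDG μ y hy.2] using W.smul_mem μ hy.1
  have hNW : ∀ x ∈ W, (f - D) x ∈ W := fun x hx => sub_mem (hW x hx) (hDW hx)
  refine ⟨fun x hx => hDW hx, hNW, ?_, ?_⟩
  · simp_rw [eigenspace, genEigenspace_restrict]
    refine Submodule.iSup_comap_subtype_eq_top (hWG.ge.trans (iSup_mono fun μ => ?_))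
    exact inf_le_inf_left _ fun y hy => mem_eigenspace_iff.mpr (hDG μ y hy)
  · simpa using isNilpotent_restrict_sub_smul_of_le_maxGenEigenspace hNW (μ := 0) (hN ▸ le_top)

theorem IsLocallyFiniteJordanDecomposition.apply_eq_smul_of_le_maxGenEigenspace {D N : End K V}
    (h : IsLocallyFiniteJordanDecomposition f D N) {Z : Submodule K V}
    (hZ : ∀ x ∈ Z, f x ∈ Z) [FiniteDimensional K Z] {μ : K} (hle : Z ≤ f.maxGenEigenspace μ)
    {x : V} (hx : x ∈ Z) : D x = μ • x := by
  obtain ⟨hD, hN, hdiag, hnil⟩ := h.2 Z hZ inferInstance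
  have hf : f.restrict hZ = D.restrict hD + N.restrict hN := by
    ext y; simp [h.1]
  have hinv : ∀ p : Submodule K Z, (∀ y ∈ p, (f.restrict hZ - μ • 1) y ∈ p) →
      ∀ y ∈ p, (-N.restrict hN) y ∈ p := by
    intro p hp y hy
    have hpf : ∀ v ∈ p.map Z.subtype, f v ∈ p.map Z.subtype := by
      rintro _ ⟨z, hz, rfl⟩
      refine ⟨f.restrict hZ z, ?_, rfl⟩
      simpa using add_mem (hp z hz) (p.smul_mem μ hz)
    obtain ⟨-, hNp, -⟩ := h.2 _ hpf inferInstance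
    obtain ⟨z, hz, hzy⟩ := hNp y ⟨y, hy, rfl⟩
    have : N.restrict hN y = z := Subtype.ext hzy.symm
    simpa [this] using neg_mem hz
  have hsub : IsNilpotent (D.restrict hD - μ • 1) := by
    have := isNilpotent_add_of_forall_mapsTo
      (isNilpotent_restrict_sub_smul_of_le_maxGenEigenspace hZ hle) hnil.neg hinv
    rwa [hf, add_sub_right_comm, add_neg_cancel_right] at this
  exact congr(($(eq_smul_one_of_iSup_eigenspace_eq_top_of_isNilpotent hdiag hsub) ⟨x, hx⟩ : V))

theorem IsLocallyFiniteJordanDecomposition.eq_scalarEnd [DecidableEq K] {D N : End K V}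
    (h : IsLocallyFiniteJordanDecomposition f D N)
    (hloc : ∀ v : V, ∃ W : Submodule K V, FiniteDimensional K W ∧ (∀ x ∈ W, f x ∈ W) ∧ v ∈ W)
    (hG : DirectSum.IsInternal f.maxGenEigenspace) : D = hG.scalarEnd id := by
  refine LinearMap.ext_of_iSup_eq_top hG.submodule_iSup_eq_top fun μ x hx => ?_
  obtain ⟨W, hWfin, hW, hxW⟩ := hloc x
  have hWG : ∀ y ∈ W ⊓ f.maxGenEigenspace μ, f y ∈ W ⊓ f.maxGenEigenspace μ := fun y hy =>
    ⟨hW y hy.1, f.mapsTo_maxGenEigenspace_of_comm rfl μ hy.2⟩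
  have : FiniteDimensional K ↥(W ⊓ f.maxGenEigenspace μ) :=
    Submodule.finiteDimensional_of_le inf_le_left
  rw [h.apply_eq_smul_of_le_maxGenEigenspace hWG inf_le_right ⟨hxW, hx⟩,
    hG.scalarEnd_apply_of_mem id hx, id]

end LocallyFinite

/-- Let `K` be a field, `V` a `K`-vector space and `f` an endomorphism of
`V` such that (i) every vector lies in a finite-dimensional `f`-invariant subspace, and
(ii) the characteristic polynomial of the restriction of `f` to every finite-dimensional
`f`-invariant subspace splits over `K`.  Then there is a unique pair `(D, N)` of
endomorphisms with `f = D + N` such that every finite-dimensional `f`-invariant subspace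
is stable under `D` and `N`, with `D` restricting to a diagonalizable map and `N` to a
nilpotent one; moreover `D` and `N` commute. -/
theorem stmt6 {K V : Type*} [Field K] [AddCommGroup V] [Module K V] (f : V →ₗ[K] V)
    (hloc : ∀ v : V, ∃ W : Submodule K V,
      FiniteDimensional K W ∧ (∀ x ∈ W, f x ∈ W) ∧ v ∈ W)
    (hsplit : ∀ (W : Submodule K V) (hW : ∀ x ∈ W, f x ∈ W) [FiniteDimensional K W],
      (LinearMap.charpoly (f.restrict hW)).Splits) :
    ∃ D N : V →ₗ[K] V,
      IsLocallyFiniteJordanDecomposition f D N ∧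
      Commute D N ∧
      ∀ D' N' : V →ₗ[K] V, IsLocallyFiniteJordanDecomposition f D' N' →
        D' = D ∧ N' = N := by
  classical
  have hG : DirectSum.IsInternal (Module.End.maxGenEigenspace f) :=
    DirectSum.isInternal_submodule_of_iSupIndep_of_iSup_eq_top
      (Module.End.independent_maxGenEigenspace f)
      (iSup_maxGenEigenspace_eq_top_of_locallyFinite hloc hsplit)
  refine ⟨hG.scalarEnd id, f - hG.scalarEnd id,
    isLocallyFiniteJordanDecomposition_scalarEnd hG hsplit,
    (commute_scalarEnd_maxGenEigenspace hG).sub_right (Commute.refl _), fun D' N' h => ?_⟩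
  obtain rfl := h.eq_scalarEnd hloc hG
  exact ⟨rfl, eq_sub_of_add_eq' h.1.symm⟩
end
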